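/- For every odd prime power q ≥ 79, the graphs G_0 = S_{q−1}(8,16; 1,−1,5,−13) and G_1 = S_{q−1}(2,4; 3,−7,15,−21) on Z_{q−1} are both 6-regular of girth at least 5. -/

import Mathlib

/-- The graph `S_n(k_1,…,k_w)` on `ZMod n`: edges join an even-labeled vertex `a`
to `a + k` for each `k ∈ K`. -/
def SGraph (n : ℕ) (K : Set (ZMod n)) : SimpleGraph (ZMod n) where
  Adj a b := a ≠ b ∧ ((Even a.val ∧ b - a ∈ K) ∨ (Even b.val ∧ a - b ∈ K))
  symm := ⟨by
    rintro a b ⟨h1, h2⟩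
    exact ⟨h1.symm, h2.symm⟩⟩
  loopless := ⟨fun a h => h.1 rfl⟩

/-- The graph `S_n(P,Q; k_1,…,k_w)` on `ZMod n`: the graph `S_n(k_1,…,k_w)` together with
the edges `{2v, 2v+P}` on even vertices and `{2v+1, 2v+1+Q}` on odd vertices. -/
def SPQGraph (n : ℕ) (P Q : ZMod n) (K : Set (ZMod n)) : SimpleGraph (ZMod n) where
  Adj a b := a ≠ b ∧ (((Even a.val ∧ b - a ∈ K) ∨ (Even b.val ∧ a - b ∈ K))
    ∨ (Even a.val ∧ Even b.val ∧ (b - a = P ∨ a - b = P))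
    ∨ (Odd a.val ∧ Odd b.val ∧ (b - a = Q ∨ a - b = Q)))
  symm := ⟨by
    rintro a b ⟨h1, h2⟩
    refine ⟨h1.symm, ?_⟩
    rcases h2 with h | ⟨ha, hb, h⟩ | ⟨ha, hb, h⟩
    · exact Or.inl h.symm
    · exact Or.inr (Or.inl ⟨hb, ha, h.symm⟩)
    · exact Or.inr (Or.inr ⟨hb, ha, h.symm⟩)⟩
  loopless := ⟨fun a h => h.1 rfl⟩

/-- The infinite analogue `S_∞(P,Q; k_1,…,k_w)` on `ℤ`. -/
def SPQGraphZ (P Q : ℤ) (K : Set ℤ) : SimpleGraph ℤ where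
  Adj a b := a ≠ b ∧ (((Even a ∧ b - a ∈ K) ∨ (Even b ∧ a - b ∈ K))
    ∨ (Even a ∧ Even b ∧ (b - a = P ∨ a - b = P))
    ∨ (Odd a ∧ Odd b ∧ (b - a = Q ∨ a - b = Q)))
  symm := ⟨by
    rintro a b ⟨h1, h2⟩
    refine ⟨h1.symm, ?_⟩
    rcases h2 with h | ⟨ha, hb, h⟩ | ⟨ha, hb, h⟩
    · exact Or.inl h.symm
    · exact Or.inr (Or.inl ⟨hb, ha, h.symm⟩)
    · exact Or.inr (Or.inr ⟨hb, ha, h.symm⟩)⟩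
  loopless := ⟨fun a h => h.1 rfl⟩

/-- The Cayley colors of a graph on `ZMod n`: differences of adjacent vertices. -/
def cayleyColors {n : ℕ} (G : SimpleGraph (ZMod n)) : Set (ZMod n) :=
  {c | ∃ a b, G.Adj a b ∧ c = a - b}

/-! For even `n`, even `P, Q` and odd `k ∈ K`, every edge of `S_n(P,Q;K)` at a vertex `x` has
the form `{x, x + d}`, where the displacement `d` runs over a six-element list depending only on
the parity of `x` (reduction modulo the even number `n` preserves parity). So the neighbours of `v`
are the `v + d`, pairwise distinct because the displacements are distinct and small compared to
`n`. A triangle, or a 4-cycle, of `S_n` lifts along these displacements to a walk of `S_∞(P,Q;K)`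
whose total displacement vanishes modulo `n`. A finite check over the two starting parities shows
that these displacements are nonzero (`S_∞` has girth at least 5) and of absolute value below
`78 ≤ n` (the span bound), so no such cycle exists. -/

theorem ZMod.val_add_intCast_modEq {m : ℤ} {n : ℕ} [NeZero n] (hm : m ∣ n) (a : ZMod n)
    (d : ℤ) : ((a + d).val : ℤ) ≡ a.val + d [ZMOD m] := by
  refine Int.ModEq.of_dvd hm ?_
  rw [← ZMod.intCast_eq_intCast_iff]
  simp

theorem ZMod.even_val_add_intCast_iff {n : ℕ} [NeZero n] (hn : 2 ∣ n) (a : ZMod n) (d : ℤ) :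
    Even ((a + d).val : ℤ) ↔ Even ((a.val : ℤ) + d) := by
  rw [Int.even_iff, Int.even_iff, (ZMod.val_add_intCast_modEq (by exact_mod_cast hn) a d).eq]

theorem ZMod.odd_val_add_intCast_iff {n : ℕ} [NeZero n] (hn : 2 ∣ n) (a : ZMod n) (d : ℤ) :
    Odd ((a + d).val : ℤ) ↔ Odd ((a.val : ℤ) + d) := by
  rw [← Int.not_even_iff_odd, ← Int.not_even_iff_odd, ZMod.even_val_add_intCast_iff hn]

theorem ZMod.intCast_ne_zero_of_abs_lt {n : ℕ} {d : ℤ} (h0 : d ≠ 0) (h : |d| < n) :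
    (d : ZMod n) ≠ 0 := fun hd =>
  h0 (Int.eq_zero_of_abs_lt_dvd ((ZMod.intCast_zmod_eq_zero_iff_dvd d n).1 hd) h)

theorem Int.emod_two_mem_zero_one (x : ℤ) : x % 2 ∈ [(0 : ℤ), 1] := by
  simp only [List.mem_cons, List.not_mem_nil, or_false]
  omega

theorem SimpleGraph.five_le_egirth {V : Type*} {G : SimpleGraph V}
    (h3 : ∀ a b c, G.Adj a b → G.Adj b c → ¬G.Adj c a)
    (h4 : ∀ a b c d, a ≠ c → b ≠ d →
      G.Adj a b → G.Adj b c → G.Adj c d → ¬G.Adj d a) :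
    5 ≤ G.egirth := by
  rw [SimpleGraph.le_egirth]
  rintro a (_ | ⟨hab, _ | ⟨hbc, _ | ⟨hcd, _ | ⟨hda, _ | ⟨_, w⟩⟩⟩⟩⟩) hw
  · simpa using hw.three_le_length
  · simpa using hw.three_le_length
  · simpa using hw.three_le_length
  · exact (h3 _ _ _ hab hbc hcd).elim
  · have hnd := hw.support_nodup
    simp only [SimpleGraph.Walk.support_cons, SimpleGraph.Walk.support_nil, List.tail_cons,
      List.nodup_cons, List.mem_cons] at hnd
    exact (h4 _ _ _ _ (by tauto) (by tauto) hab hbc hcd hda).elim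
  · simp only [SimpleGraph.Walk.length_cons]
    norm_cast
    omega

namespace SPQGraph

def steps (P Q : ℤ) (K : List ℤ) (x : ℤ) : List ℤ :=
  if Even x then P :: -P :: K else Q :: -Q :: K.map (- ·)

variable {P Q : ℤ} {K : List ℤ}

theorem steps_congr {x y : ℤ} (h : x ≡ y [ZMOD 2]) : steps P Q K x = steps P Q K y := by
  simp only [steps, Int.even_iff, h.eq]

theorem length_steps (x : ℤ) : (steps P Q K x).length = K.length + 2 := by
  unfold steps
  split <;> simp

theorem mem_steps_of_even {x d : ℤ} (hx : Even x) :
    d ∈ steps P Q K x ↔ d = P ∨ d = -P ∨ d ∈ K := by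
  simp [steps, hx]

theorem mem_steps_of_odd {x d : ℤ} (hx : Odd x) :
    d ∈ steps P Q K x ↔ d = Q ∨ d = -Q ∨ -d ∈ K := by
  simp [steps, Int.not_even_iff_odd.2 hx, neg_eq_iff_eq_neg]

def ofInt (n : ℕ) (P Q : ℤ) (K : List ℤ) : SimpleGraph (ZMod n) :=
  SPQGraph n P Q ((↑) '' (K.toFinset : Set ℤ))

variable {n : ℕ} [NeZero n]

theorem exists_mem_steps_of_adj (hn : 2 ∣ n) (hK : ∀ k ∈ K, Odd k) {a b : ZMod n}
    (hab : (ofInt n P Q K).Adj a b) : ∃ d ∈ steps P Q K a.val, b = a + d := by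
  obtain ⟨-, (⟨ha, k, hk, hba⟩ | ⟨hb, k, hk, hab⟩) | ⟨ha, -, hba | hab⟩ | ⟨ha, -, hba | hab⟩⟩ :=
    hab
  · have hk : k ∈ K := List.mem_toFinset.1 hk
    exact ⟨k, (mem_steps_of_even ((Int.even_coe_nat _).2 ha)).2 (.inr (.inr hk)),
      by rw [hba]; abel⟩
  · have hk : k ∈ K := List.mem_toFinset.1 hk
    have ha : Odd (a.val : ℤ) := by
      rw [show a = b + k by rw [hab]; abel, ZMod.odd_val_add_intCast_iff hn]
      exact (Int.even_coe_nat _).2 hb |>.add_odd (hK k hk)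
    exact ⟨-k, (mem_steps_of_odd ha).2 (.inr (.inr (by rwa [neg_neg]))),
      by push_cast; rw [hab]; abel⟩
  · exact ⟨P, (mem_steps_of_even ((Int.even_coe_nat _).2 ha)).2 (.inl rfl),
      by rw [← hba]; abel⟩
  · exact ⟨-P, (mem_steps_of_even ((Int.even_coe_nat _).2 ha)).2 (.inr (.inl rfl)),
      by push_cast; rw [← hab]; abel⟩
  · exact ⟨Q, (mem_steps_of_odd ((Int.odd_coe_nat _).2 ha)).2 (.inl rfl),
      by rw [← hba]; abel⟩
  · exact ⟨-Q, (mem_steps_of_odd ((Int.odd_coe_nat _).2 ha)).2 (.inr (.inl rfl)),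
      by push_cast; rw [← hab]; abel⟩

theorem adj_add_of_mem_steps (hn : 2 ∣ n) (hP : Even P) (hQ : Even Q) (hK : ∀ k ∈ K, Odd k)
    {a : ZMod n} {d : ℤ} (hd : d ∈ steps P Q K a.val) (hd0 : (d : ZMod n) ≠ 0) :
    (ofInt n P Q K).Adj a (a + d) := by
  refine ⟨by simpa using hd0, ?_⟩
  rcases Nat.even_or_odd a.val with ha | ha
  · have ha' := (Int.even_coe_nat _).2 ha
    rcases (mem_steps_of_even ha').1 hd with rfl | rfl | hk
    · refine Or.inr (Or.inl ⟨ha, ?_, Or.inl (by abel)⟩)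
      rw [← Int.even_coe_nat, ZMod.even_val_add_intCast_iff hn]
      exact ha'.add hP
    · refine Or.inr (Or.inl ⟨ha, ?_, Or.inr (by push_cast; abel)⟩)
      rw [← Int.even_coe_nat, ZMod.even_val_add_intCast_iff hn]
      exact ha'.add hP.neg
    · exact Or.inl (Or.inl ⟨ha, d, List.mem_toFinset.2 hk, by abel⟩)
  · have ha' := (Int.odd_coe_nat _).2 ha
    rcases (mem_steps_of_odd ha').1 hd with rfl | rfl | hk
    · refine Or.inr (Or.inr ⟨ha, ?_, Or.inl (by abel)⟩)
      rw [← Int.odd_coe_nat, ZMod.odd_val_add_intCast_iff hn]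
      exact ha'.add_even hQ
    · refine Or.inr (Or.inr ⟨ha, ?_, Or.inr (by push_cast; abel)⟩)
      rw [← Int.odd_coe_nat, ZMod.odd_val_add_intCast_iff hn]
      exact ha'.add_even hQ.neg
    · refine Or.inl (Or.inr ⟨?_, -d, List.mem_toFinset.2 hk, by push_cast; abel⟩)
      rw [← Int.even_coe_nat, ZMod.even_val_add_intCast_iff hn]
      exact ha'.add_odd (odd_neg.1 (hK _ hk))

theorem neighborSet_eq (hn : 2 ∣ n) (hP : Even P) (hQ : Even Q) (hK : ∀ k ∈ K, Odd k)
    (v : ZMod n) (hne : ∀ d ∈ steps P Q K v.val, (d : ZMod n) ≠ 0) :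
    (ofInt n P Q K).neighborSet v = (fun d : ℤ => v + d) '' {d | d ∈ steps P Q K v.val} := by
  ext b
  constructor
  · intro hb
    obtain ⟨d, hd, rfl⟩ := exists_mem_steps_of_adj hn hK hb
    exact ⟨d, hd, rfl⟩
  · rintro ⟨d, hd, rfl⟩
    exact adj_add_of_mem_steps hn hP hQ hK hd (hne d hd)

theorem exists_lift_of_adj (hn : 2 ∣ n) (hK : ∀ k ∈ K, Odd k) {a b : ZMod n}
    (hab : (ofInt n P Q K).Adj a b) {x : ℤ} (hx : x ≡ a.val [ZMOD 2]) :
    ∃ d ∈ steps P Q K x, b = a + d ∧ x + d ≡ b.val [ZMOD 2] := by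
  obtain ⟨d, hd, rfl⟩ := exists_mem_steps_of_adj hn hK hab
  exact ⟨d, steps_congr hx ▸ hd, rfl,
    (hx.add_right d).trans (ZMod.val_add_intCast_modEq (by exact_mod_cast hn) a d).symm⟩

/-- The last two fields say that the walks of `S_∞(P,Q;K)` underlying a triangle or a 4-cycle
do not close up, and have span below `m`, so they cannot close up modulo any `n ≥ m` either. -/
structure Admissible (P Q : ℤ) (K : List ℤ) (m : ℕ) : Prop where
  even_P : Even P
  even_Q : Even Q
  odd_of_mem : ∀ k ∈ K, Odd k
  nodup_steps : ∀ x ∈ [(0 : ℤ), 1], (steps P Q K x).Nodup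
  abs_steps : ∀ x ∈ [(0 : ℤ), 1], ∀ d ∈ steps P Q K x, 0 < |d| ∧ 2 * |d| < m
  three_steps : ∀ x ∈ [(0 : ℤ), 1], ∀ d₁ ∈ steps P Q K x, ∀ d₂ ∈ steps P Q K (x + d₁),
    ∀ d₃ ∈ steps P Q K (x + d₁ + d₂), 0 < |d₁ + d₂ + d₃| ∧ |d₁ + d₂ + d₃| < m
  four_steps : ∀ x ∈ [(0 : ℤ), 1], ∀ d₁ ∈ steps P Q K x, ∀ d₂ ∈ steps P Q K (x + d₁),
    ∀ d₃ ∈ steps P Q K (x + d₁ + d₂), ∀ d₄ ∈ steps P Q K (x + d₁ + d₂ + d₃),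
      d₁ + d₂ ≠ 0 → d₂ + d₃ ≠ 0 → 0 < |d₁ + d₂ + d₃ + d₄| ∧ |d₁ + d₂ + d₃ + d₄| < m

namespace Admissible

variable {m : ℕ}

theorem nodup (h : Admissible P Q K m) (x : ℤ) : (steps P Q K x).Nodup := by
  rw [← steps_congr (Int.mod_modEq x 2)]
  exact h.nodup_steps _ (Int.emod_two_mem_zero_one x)

theorem abs_of_mem_steps (h : Admissible P Q K m) {x d : ℤ} (hd : d ∈ steps P Q K x) :
    0 < |d| ∧ 2 * |d| < m := by
  rw [← steps_congr (Int.mod_modEq x 2)] at hd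
  exact h.abs_steps _ (Int.emod_two_mem_zero_one x) d hd

theorem ncard_neighborSet (h : Admissible P Q K m) (hn : 2 ∣ n) (hmn : m ≤ n) (v : ZMod n) :
    ((ofInt n P Q K).neighborSet v).ncard = K.length + 2 := by
  have hm : (m : ℤ) ≤ n := by exact_mod_cast hmn
  have hne : ∀ d ∈ steps P Q K v.val, (d : ZMod n) ≠ 0 := fun d hd => by
    obtain ⟨hd0, hdm⟩ := h.abs_of_mem_steps hd
    exact ZMod.intCast_ne_zero_of_abs_lt (abs_pos.1 hd0) (by linarith)
  rw [neighborSet_eq hn h.even_P h.even_Q h.odd_of_mem v hne, Set.InjOn.ncard_image,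
    ← List.coe_toFinset, Set.ncard_coe_finset, List.toFinset_card_of_nodup (h.nodup _),
    length_steps]
  intro d hd e he hde
  by_contra hne
  obtain ⟨-, hdm⟩ := h.abs_of_mem_steps hd
  obtain ⟨-, hem⟩ := h.abs_of_mem_steps he
  have hde : ((d - e : ℤ) : ZMod n) = 0 := by
    push_cast
    simpa [sub_eq_zero] using hde
  exact ZMod.intCast_ne_zero_of_abs_lt (sub_ne_zero.2 hne) (by linarith [abs_sub d e]) hde

theorem five_le_egirth (h : Admissible P Q K m) (hn : 2 ∣ n) (hmn : m ≤ n) :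
    5 ≤ (ofInt n P Q K).egirth := by
  have hD : ∀ D : ℤ, 0 < |D| ∧ |D| < m → (D : ZMod n) ≠ 0 := fun D hD =>
    ZMod.intCast_ne_zero_of_abs_lt (abs_pos.1 hD.1) (hD.2.trans_le (by exact_mod_cast hmn))
  have hK := h.odd_of_mem
  refine SimpleGraph.five_le_egirth (fun a b c hab hbc hca => ?_)
    (fun a b c d hac hbd hab hbc hcd hda => ?_)
  · obtain ⟨d₁, h₁, rfl, hb⟩ := exists_lift_of_adj hn hK hab (Int.mod_modEq _ 2)
    obtain ⟨d₂, h₂, rfl, hc⟩ := exists_lift_of_adj hn hK hbc hb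
    obtain ⟨d₃, h₃, ha, -⟩ := exists_lift_of_adj hn hK hca hc
    exact hD _ (h.three_steps _ (Int.emod_two_mem_zero_one _) d₁ h₁ d₂ h₂ d₃ h₃)
      (by push_cast; linear_combination -ha)
  · obtain ⟨d₁, h₁, rfl, hb⟩ := exists_lift_of_adj hn hK hab (Int.mod_modEq _ 2)
    obtain ⟨d₂, h₂, rfl, hc⟩ := exists_lift_of_adj hn hK hbc hb
    obtain ⟨d₃, h₃, rfl, hd⟩ := exists_lift_of_adj hn hK hcd hc
    obtain ⟨d₄, h₄, ha, -⟩ := exists_lift_of_adj hn hK hda hd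
    refine hD _
      (h.four_steps _ (Int.emod_two_mem_zero_one _) d₁ h₁ d₂ h₂ d₃ h₃ d₄ h₄ ?_ ?_)
      (by push_cast; linear_combination -ha)
    · intro h₁₂
      exact hac (by rw [add_assoc, ← Int.cast_add, h₁₂, Int.cast_zero, add_zero])
    · intro h₂₃
      exact hbd
        (by rw [add_assoc _ (d₂ : ZMod n), ← Int.cast_add, h₂₃, Int.cast_zero, add_zero])

end Admissible

theorem admissible_G0 : Admissible 8 16 [1, -1, 5, -13] 78 := by
  constructor <;> decide

theorem admissible_G1 : Admissible 2 4 [3, -7, 15, -21] 78 := by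
  constructor <;> decide

end SPQGraph

theorem stmt15_general (q : ℕ) (hq : 79 ≤ q) (hqodd : Odd q) :
    ((∀ v : ZMod (q - 1),
        ((SPQGraph (q - 1) 8 16
          ({1, -1, 5, -13} : Set (ZMod (q - 1)))).neighborSet v).ncard = 6) ∧
      5 ≤ (SPQGraph (q - 1) 8 16 ({1, -1, 5, -13} : Set (ZMod (q - 1)))).egirth) ∧
    ((∀ v : ZMod (q - 1),
        ((SPQGraph (q - 1) 2 4
          ({3, -7, 15, -21} : Set (ZMod (q - 1)))).neighborSet v).ncard = 6) ∧
      5 ≤ (SPQGraph (q - 1) 2 4 ({3, -7, 15, -21} : Set (ZMod (q - 1)))).egirth) := by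
  have : NeZero (q - 1) := ⟨by omega⟩
  have hn : 2 ∣ q - 1 := by
    obtain ⟨k, rfl⟩ := hqodd
    simp
  have hG₀ : SPQGraph (q - 1) 8 16 {1, -1, 5, -13} =
      SPQGraph.ofInt (q - 1) 8 16 [1, -1, 5, -13] := by
    simp [SPQGraph.ofInt, Set.image_insert_eq]
  have hG₁ : SPQGraph (q - 1) 2 4 {3, -7, 15, -21} =
      SPQGraph.ofInt (q - 1) 2 4 [3, -7, 15, -21] := by
    simp [SPQGraph.ofInt, Set.image_insert_eq]
  rw [hG₀, hG₁]
  exact ⟨⟨SPQGraph.admissible_G0.ncard_neighborSet hn (by omega),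
      SPQGraph.admissible_G0.five_le_egirth hn (by omega)⟩,
    SPQGraph.admissible_G1.ncard_neighborSet hn (by omega),
    SPQGraph.admissible_G1.five_le_egirth hn (by omega)⟩

/-- For every odd prime power q ≥ 79, the graphs G₀ = S_{q−1}(8,16; 1,−1,5,−13)
and G₁ = S_{q−1}(2,4; 3,−7,15,−21) on Z_{q−1} are both 6-regular of girth at
least 5. -/
theorem stmt15 (q : ℕ) (hq : 79 ≤ q) (hqodd : Odd q) (hpp : IsPrimePow q) :
    ((∀ v : ZMod (q - 1),
        ((SPQGraph (q - 1) 8 16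
          ({1, -1, 5, -13} : Set (ZMod (q - 1)))).neighborSet v).ncard = 6) ∧
      5 ≤ (SPQGraph (q - 1) 8 16 ({1, -1, 5, -13} : Set (ZMod (q - 1)))).egirth) ∧
    ((∀ v : ZMod (q - 1),
        ((SPQGraph (q - 1) 2 4
          ({3, -7, 15, -21} : Set (ZMod (q - 1)))).neighborSet v).ncard = 6) ∧
      5 ≤ (SPQGraph (q - 1) 2 4 ({3, -7, 15, -21} : Set (ZMod (q - 1)))).egirth) :=
  stmt15_general q hq hqodd
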